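/- The family of Kepler orbits with fixed energy E, written in reciprocal-polar form ρ(θ) = 1/r(θ), satisfies the second-order ODE ρ'' = (ρ² + ρ'²)/(2(ρ + E)) − ρ, and for this ODE the Tresse relative invariant I₂ = D²f_{pp} − 4Df_{pρ} + f_p(4f_{pρ} − Df_{pp}) − 3f_{pp}f_ρ + 6f_{ρρ} (with p = ρ', f(θ,ρ,p) = (ρ²+p²)/(2(ρ+E)) − ρ, D = ∂_θ + p∂_ρ + f∂_p) equals 9E²/(E+ρ)³; in particular I₂ ≠ 0 whenever E ≠ 0. -/

import Mathlib

open Real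

/-- Partial derivative in the first (θ) variable. -/
noncomputable def pdθ (g : ℝ → ℝ → ℝ → ℝ) : ℝ → ℝ → ℝ → ℝ :=
  fun θ ρ p => deriv (fun t => g t ρ p) θ

/-- Partial derivative in the second (ρ) variable. -/
noncomputable def pdρ (g : ℝ → ℝ → ℝ → ℝ) : ℝ → ℝ → ℝ → ℝ :=
  fun θ ρ p => deriv (fun t => g θ t p) ρ

/-- Partial derivative in the third (p = ρ') variable. -/
noncomputable def pdp (g : ℝ → ℝ → ℝ → ℝ) : ℝ → ℝ → ℝ → ℝ :=
  fun θ ρ p => deriv (fun t => g θ ρ t) p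

/-- Total derivative operator `D = ∂_θ + p ∂_ρ + f ∂_p` of the ODE `ρ'' = f`. -/
noncomputable def Dop (f g : ℝ → ℝ → ℝ → ℝ) : ℝ → ℝ → ℝ → ℝ :=
  fun θ ρ p => pdθ g θ ρ p + p * pdρ g θ ρ p + f θ ρ p * pdp g θ ρ p

/-- Tresse relative invariant
`I₂ = D²f_pp − 4Df_pρ + f_p(4f_pρ − Df_pp) − 3f_pp f_ρ + 6f_ρρ`. -/
noncomputable def tresseI₂ (f : ℝ → ℝ → ℝ → ℝ) : ℝ → ℝ → ℝ → ℝ :=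
  fun θ ρ p =>
    Dop f (Dop f (pdp (pdp f))) θ ρ p
      - 4 * Dop f (pdρ (pdp f)) θ ρ p
      + pdp f θ ρ p * (4 * pdρ (pdp f) θ ρ p - Dop f (pdp (pdp f)) θ ρ p)
      - 3 * pdp (pdp f) θ ρ p * pdρ f θ ρ p
      + 6 * pdρ (pdρ f) θ ρ p

/-- Right-hand side of the fixed-energy Kepler ODE `ρ'' = (ρ²+p²)/(2(ρ+E)) − ρ`. -/
noncomputable def keplerF (E : ℝ) : ℝ → ℝ → ℝ → ℝ :=
  fun _ ρ p => (ρ ^ 2 + p ^ 2) / (2 * (ρ + E)) - ρ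

/-
The right-hand side has the partial-fraction form `f = (E² + p²)/(2u) − u/2` with `u = ρ + E`,
so `f_p = p/u`, `f_pp = 1/u`, `f_pρ = −p/u²`, `f_ρ = −1/2 − (E² + p²)/(2u²)` and
`f_ρρ = (E² + p²)/u³`. Since `f` does not depend on `θ`, `D f_pp = p ∂_ρ(1/u) = f_pρ`, which
collapses `I₂` to `−3 D f_pρ + 3 f_p f_pρ − 3 f_pp f_ρ + 6 f_ρρ = 9E²/u³`.
The orbits `ρ = a cos θ + b sin θ + c` satisfy `ρ'' = c − ρ` and `ρ² + ρ'² = 2c(ρ + E)`, the latter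
being the energy condition `a² + b² − c² = 2cE`.
-/

section PartialDerivatives

variable {f g h : ℝ → ℝ → ℝ → ℝ} {s : Set ℝ} {θ ρ p : ℝ}

theorem pdρ_congr (hs : IsOpen s) (hgh : ∀ θ ρ p, ρ ∈ s → g θ ρ p = h θ ρ p) (hρ : ρ ∈ s) :
    pdρ g θ ρ p = pdρ h θ ρ p :=
  Filter.EventuallyEq.deriv_eq (Filter.eventually_of_mem (hs.mem_nhds hρ) fun t ht => hgh θ t p ht)

theorem Dop_congr (hs : IsOpen s) (hgh : ∀ θ ρ p, ρ ∈ s → g θ ρ p = h θ ρ p) (hρ : ρ ∈ s) :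
    Dop f g θ ρ p = Dop f h θ ρ p := by
  have hθ : (fun t => g t ρ p) = fun t => h t ρ p := funext fun t => hgh t ρ p hρ
  have hp : (fun t => g θ ρ t) = fun t => h θ ρ t := funext fun t => hgh θ ρ t hρ
  simp only [Dop, pdθ, pdp, hθ, hp, pdρ_congr hs hgh hρ]

theorem Dop_eq_of_hasDerivAt {a b : ℝ} (hθ : ∀ t, g t ρ p = g θ ρ p)
    (hρ : HasDerivAt (fun t => g θ t p) a ρ) (hp : HasDerivAt (fun t => g θ ρ t) b p) :
    Dop f g θ ρ p = p * a + f θ ρ p * b := by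
  have hθ' : pdθ g θ ρ p = 0 := by
    simp only [pdθ, funext hθ, deriv_const]
  have hρ' : pdρ g θ ρ p = a := hρ.deriv
  have hp' : pdp g θ ρ p = b := hp.deriv
  rw [Dop, hθ', hρ', hp', zero_add]

end PartialDerivatives

theorem hasDerivAt_const_div_add_pow (c E ρ : ℝ) (n : ℕ) (hρ : ρ + E ≠ 0) :
    HasDerivAt (fun t => c / (t + E) ^ (n + 1)) (-((n + 1) * c) / (ρ + E) ^ (n + 2)) ρ := by
  refine ((hasDerivAt_const ρ c).div (((hasDerivAt_id ρ).add_const E).pow (n + 1))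
    (pow_ne_zero _ hρ)).congr_deriv ?_
  simp only [id, mul_one, zero_mul, zero_sub, Nat.add_sub_cancel, Nat.cast_add, Nat.cast_one,
    Pi.pow_apply]
  field_simp
  ring

theorem hasDerivAt_const_div_add (c E ρ : ℝ) (hρ : ρ + E ≠ 0) :
    HasDerivAt (fun t => c / (t + E)) (-c / (ρ + E) ^ 2) ρ := by
  simpa using hasDerivAt_const_div_add_pow c E ρ 0 hρ

theorem isOpen_add_ne (E : ℝ) : IsOpen {ρ : ℝ | ρ + E ≠ 0} :=
  isOpen_ne_fun (continuous_add_const E) continuous_const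

section KeplerDerivatives

variable {E θ ρ p : ℝ}

theorem keplerF_eq (hρ : ρ + E ≠ 0) :
    keplerF E θ ρ p = (E ^ 2 + p ^ 2) / 2 / (ρ + E) - (ρ + E) / 2 := by
  simp only [keplerF]
  field_simp
  ring

theorem pdp_keplerF (E : ℝ) : pdp (keplerF E) = fun _ ρ p => p / (ρ + E) := by
  funext θ ρ p
  refine ((((hasDerivAt_pow 2 p).const_add (ρ ^ 2)).div_const (2 * (ρ + E))).sub_const ρ
    ).deriv.trans ?_
  norm_num
  rw [mul_div_mul_left _ _ two_ne_zero]

theorem pdp_pdp_keplerF (E : ℝ) : pdp (pdp (keplerF E)) = fun _ ρ _ => 1 / (ρ + E) := by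
  funext θ ρ p
  rw [pdp_keplerF]
  exact ((hasDerivAt_id p).div_const (ρ + E)).deriv

theorem pdρ_keplerF (hρ : ρ + E ≠ 0) :
    pdρ (keplerF E) θ ρ p = -1 / 2 - (E ^ 2 + p ^ 2) / 2 / (ρ + E) ^ 2 := by
  rw [pdρ_congr (isOpen_add_ne E) (fun _ _ _ hρ => keplerF_eq hρ) hρ]
  exact ((hasDerivAt_const_div_add _ E ρ hρ).sub (((hasDerivAt_id ρ).add_const E).div_const 2)
    ).deriv.trans (by ring)

theorem pdρ_pdρ_keplerF (hρ : ρ + E ≠ 0) :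
    pdρ (pdρ (keplerF E)) θ ρ p = (E ^ 2 + p ^ 2) / (ρ + E) ^ 3 := by
  rw [pdρ_congr (isOpen_add_ne E) (fun _ _ _ hρ => pdρ_keplerF hρ) hρ]
  exact ((hasDerivAt_const_div_add_pow _ E ρ 1 hρ).const_sub (-1 / 2)).deriv.trans (by ring)

theorem pdρ_pdp_keplerF (hρ : ρ + E ≠ 0) :
    pdρ (pdp (keplerF E)) θ ρ p = -p / (ρ + E) ^ 2 := by
  rw [pdp_keplerF]
  exact (hasDerivAt_const_div_add p E ρ hρ).deriv

theorem Dop_pdp_pdp_keplerF (hρ : ρ + E ≠ 0) :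
    Dop (keplerF E) (pdp (pdp (keplerF E))) θ ρ p = -p / (ρ + E) ^ 2 := by
  rw [pdp_pdp_keplerF, Dop_eq_of_hasDerivAt (fun _ => rfl) (hasDerivAt_const_div_add 1 E ρ hρ)
    (hasDerivAt_const p _)]
  ring

theorem Dop_pdρ_pdp_keplerF (hρ : ρ + E ≠ 0) :
    Dop (keplerF E) (pdρ (pdp (keplerF E))) θ ρ p =
      2 * p ^ 2 / (ρ + E) ^ 3 - keplerF E θ ρ p / (ρ + E) ^ 2 := by
  rw [Dop_congr (isOpen_add_ne E) (fun _ _ _ hρ => pdρ_pdp_keplerF hρ) hρ,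
    Dop_eq_of_hasDerivAt (fun _ => rfl) (hasDerivAt_const_div_add_pow (-p) E ρ 1 hρ)
      ((hasDerivAt_id p).neg.div_const ((ρ + E) ^ 2))]
  ring

theorem Dop_Dop_pdp_pdp_keplerF (hρ : ρ + E ≠ 0) :
    Dop (keplerF E) (Dop (keplerF E) (pdp (pdp (keplerF E)))) θ ρ p =
      Dop (keplerF E) (pdρ (pdp (keplerF E))) θ ρ p :=
  Dop_congr (isOpen_add_ne E)
    (fun _ _ _ hρ => (Dop_pdp_pdp_keplerF hρ).trans (pdρ_pdp_keplerF hρ).symm) hρ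

theorem tresseI₂_keplerF (hρ : ρ + E ≠ 0) :
    tresseI₂ (keplerF E) θ ρ p = 9 * E ^ 2 / (E + ρ) ^ 3 := by
  rw [tresseI₂, Dop_Dop_pdp_pdp_keplerF hρ, Dop_pdρ_pdp_keplerF hρ, Dop_pdp_pdp_keplerF hρ,
    pdρ_pdp_keplerF hρ, pdρ_keplerF hρ, pdρ_pdρ_keplerF hρ, pdp_pdp_keplerF, pdp_keplerF,
    keplerF_eq hρ, add_comm E ρ]
  field_simp
  ring

end KeplerDerivatives

-- The derivative keeps the shape `a' cos + b' sin + c'`, so it can be differentiated again.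
theorem hasDerivAt_harmonic (a b c θ : ℝ) :
    HasDerivAt (fun x => a * cos x + b * sin x + c) (b * cos θ + -a * sin θ + 0) θ :=
  ((((hasDerivAt_cos θ).const_mul a).add ((hasDerivAt_sin θ).const_mul b)).add_const c
    ).congr_deriv (by ring)

theorem deriv_harmonic (a b c : ℝ) :
    deriv (fun x => a * cos x + b * sin x + c) = fun x => b * cos x + -a * sin x + 0 :=
  funext fun θ => (hasDerivAt_harmonic a b c θ).deriv

theorem deriv_deriv_orbit_eq_keplerF {E a b c : ℝ} (habc : a ^ 2 + b ^ 2 - c ^ 2 = 2 * c * E)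
    {ρ : ℝ → ℝ} (hρ : ∀ θ, ρ θ = a * cos θ + b * sin θ + c) (θ : ℝ) (hθ : ρ θ + E ≠ 0) :
    deriv (deriv ρ) θ = keplerF E θ (ρ θ) (deriv ρ θ) := by
  have hρ' : deriv ρ = fun x => b * cos x + -a * sin x + 0 := funext hρ ▸ deriv_harmonic a b c
  have hρ'' : deriv (deriv ρ) θ = c - ρ θ := by
    rw [hρ', deriv_harmonic, hρ]
    ring
  have henergy : ρ θ ^ 2 + deriv ρ θ ^ 2 = 2 * c * (ρ θ + E) := by
    rw [hρ', hρ]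
    linear_combination (a ^ 2 + b ^ 2) * sin_sq_add_cos_sq θ + habc
  rw [hρ'', keplerF, henergy]
  field_simp

/-- The reciprocal-polar form of Kepler orbits of fixed energy E
satisfies `ρ'' = (ρ²+ρ'²)/(2(ρ+E)) − ρ`, and the Tresse relative invariant of
this second-order ODE is `I₂ = 9E²/(E+ρ)³`; in particular `I₂ ≠ 0` for `E ≠ 0`. -/
theorem fixed_energy_kepler_tresse_invariant (E : ℝ) :
    (∀ a b c : ℝ, a ^ 2 + b ^ 2 - c ^ 2 = 2 * c * E →
      ∀ ρfun : ℝ → ℝ, (∀ θ, ρfun θ = a * Real.cos θ + b * Real.sin θ + c) →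
      ∀ θ, ρfun θ + E ≠ 0 →
        deriv (deriv ρfun) θ = keplerF E θ (ρfun θ) (deriv ρfun θ)) ∧
    (∀ θ ρ p : ℝ, ρ + E ≠ 0 →
        tresseI₂ (keplerF E) θ ρ p = 9 * E ^ 2 / (E + ρ) ^ 3) ∧
    (E ≠ 0 → ∀ θ ρ p : ℝ, ρ + E ≠ 0 → tresseI₂ (keplerF E) θ ρ p ≠ 0) := by
  refine ⟨fun _ _ _ habc _ hρ θ hθ => deriv_deriv_orbit_eq_keplerF habc hρ θ hθ,
    fun _ _ _ hρ => tresseI₂_keplerF hρ, fun hE _ ρ _ hρ => ?_⟩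
  rw [tresseI₂_keplerF hρ]
  exact div_ne_zero (by positivity) (pow_ne_zero 3 (by rwa [add_comm]))
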